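/- arXiv:1310.5034 — 6 statements merged into one kernel-verified Lean document; each statement's English description precedes it below -/
import Mathlib

section
/- Let X be a discrete random variable with E[X] = 0 and |X| ≤ C almost surely, for a constant C ≥ 0. Then for every t ≥ 0 with tC ≤ a, the moment generating function satisfies E[e^{tX}] ≤ 1 + (e^a/2)·t²·Var(X). -/
/-!
Taylor's theorem with the Lagrange remainder gives `exp y = 1 + y + exp ξ * y ^ 2 / 2` with `ξ`
between `0` and `y`, so `exp y ≤ 1 + y + exp a / 2 * y ^ 2` whenever `|y| ≤ a`. Applying this
pointwise to `y = t * X ω` and integrating, the linear term vanishes because `X` is centred.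
-/

open MeasureTheory ProbabilityTheory Real

open Set in
theorem Real.exp_le_one_add_add_exp_mul_sq {y a : ℝ} (hy : |y| ≤ a) :
    exp y ≤ 1 + y + exp a / 2 * y ^ 2 := by
  rcases eq_or_ne y 0 with rfl | hy0
  · simp
  obtain ⟨ξ, hξ, hrem⟩ := taylor_mean_remainder_lagrange_iteratedDeriv (n := 1) hy0.symm
    contDiff_exp.contDiffOn
  have htaylor : taylorWithinEval exp 1 (uIcc 0 y) 0 y = 1 + y := by
    have hu : UniqueDiffWithinAt ℝ (uIcc 0 y) 0 := uniqueDiffOn_uIcc hy0.symm 0 left_mem_uIcc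
    simp [taylor_within_apply, (hasDerivAt_exp 0).hasDerivWithinAt.derivWithin hu]
  have hξa : exp ξ ≤ exp a :=
    exp_le_exp.mpr <| hξ.2.le.trans <| max_le ((abs_nonneg y).trans hy) ((le_abs_self y).trans hy)
  rw [htaylor, iteratedDeriv_eq_iterate, iter_deriv_exp] at hrem
  simp only [sub_zero, Nat.reduceAdd, Nat.factorial_two, Nat.cast_ofNat] at hrem
  nlinarith [mul_le_mul_of_nonneg_right hξa (sq_nonneg y)]

theorem MeasureTheory.integral_exp_le_of_abs_le {Ω : Type*} [MeasurableSpace Ω]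
    {μ : Measure Ω} [IsProbabilityMeasure μ] {Y : Ω → ℝ} {a : ℝ}
    (hY : AEStronglyMeasurable Y μ) (hbd : ∀ᵐ ω ∂μ, |Y ω| ≤ a) :
    ∫ ω, exp (Y ω) ∂μ ≤ 1 + ∫ ω, Y ω ∂μ + exp a / 2 * ∫ ω, Y ω ^ 2 ∂μ := by
  have hY1 : Integrable Y μ := .of_bound hY a (by simpa using hbd)
  have hY2 : Integrable (fun ω ↦ Y ω ^ 2) μ :=
    .of_bound (hY.pow 2) (a ^ 2) <| hbd.mono fun ω hω ↦ by
      simpa using pow_le_pow_left₀ (abs_nonneg _) hω 2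
  have hexp : Integrable (fun ω ↦ exp (Y ω)) μ :=
    .of_bound (continuous_exp.comp_aestronglyMeasurable hY) (exp a) <| hbd.mono fun ω hω ↦ by
      simpa using exp_le_exp.mpr ((le_abs_self _).trans hω)
  have hlin : Integrable (fun ω ↦ 1 + Y ω) μ := (integrable_const 1).add hY1
  calc ∫ ω, exp (Y ω) ∂μ ≤ ∫ ω, (1 + Y ω + exp a / 2 * Y ω ^ 2) ∂μ :=
        integral_mono_ae hexp (hlin.add (hY2.const_mul _)) <|
          hbd.mono fun ω hω ↦ exp_le_one_add_add_exp_mul_sq hω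
    _ = 1 + ∫ ω, Y ω ∂μ + exp a / 2 * ∫ ω, Y ω ^ 2 ∂μ := by
        rw [integral_add hlin (hY2.const_mul _),
          integral_add (integrable_const 1) hY1, integral_const_mul]
        simp

theorem stmt6_general {Ω : Type*} [MeasurableSpace Ω] (μ : Measure Ω) [IsProbabilityMeasure μ]
    (X : Ω → ℝ) (hmeas : Measurable X)
    (C : ℝ) (hbd : ∀ᵐ ω ∂μ, |X ω| ≤ C)
    (hmean : ∫ ω, X ω ∂μ = 0)
    (t a : ℝ) (ht : 0 ≤ t) (hta : t * C ≤ a) :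
    ∫ ω, Real.exp (t * X ω) ∂μ ≤
      1 + (Real.exp a / 2) * t ^ 2 * ∫ ω, (X ω) ^ 2 ∂μ := by
  have htX : ∀ᵐ ω ∂μ, |t * X ω| ≤ a := hbd.mono fun ω hω ↦ by
    rw [abs_mul, abs_of_nonneg ht]
    exact (mul_le_mul_of_nonneg_left hω ht).trans hta
  calc ∫ ω, exp (t * X ω) ∂μ
      ≤ 1 + ∫ ω, t * X ω ∂μ + exp a / 2 * ∫ ω, (t * X ω) ^ 2 ∂μ :=
        integral_exp_le_of_abs_le (hmeas.const_mul t).aestronglyMeasurable htX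
    _ = 1 + exp a / 2 * t ^ 2 * ∫ ω, X ω ^ 2 ∂μ := by
        simp_rw [mul_pow, integral_const_mul, hmean]
        ring

theorem stmt6 {Ω : Type*} [MeasurableSpace Ω] (μ : Measure Ω) [IsProbabilityMeasure μ]
    (X : Ω → ℝ) (hmeas : Measurable X) (hfin : (Set.range X).Finite)
    (C : ℝ) (hC : 0 ≤ C) (hbd : ∀ᵐ ω ∂μ, |X ω| ≤ C)
    (hmean : ∫ ω, X ω ∂μ = 0)
    (t a : ℝ) (ht : 0 ≤ t) (hta : t * C ≤ a) :
    ∫ ω, Real.exp (t * X ω) ∂μ ≤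
      1 + (Real.exp a / 2) * t ^ 2 * ∫ ω, (X ω) ^ 2 ∂μ :=
  stmt6_general μ X hmeas C hbd hmean t a ht hta
end

section
/- Let X_1, ..., X_n be discrete, independent random variables with E[X_i] = 0 and |X_i| ≤ C almost surely, and let Y = Σ X_i with Var(Y) = Σ Var(X_i). Then for λ ≥ 0, P(|Y| ≥ λ·sqrt(Var(Y))) ≤ 2·exp(−λ²/(2e^a)), where a ≥ 0 is such that λ = a·e^a·sqrt(Var(Y))/C. -/
/-!
For `0 ≤ u ≤ a`, `exp u - 1 - u ≤ u ^ 2 / 2 * exp u ≤ u ^ 2 / 2 * exp a`, and for `u ≤ 0` even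
`exp u - 1 - u ≤ u ^ 2 / 2`. Applied to `u = t * X` with `t * C ≤ a`, this gives for a centred
variable `E[exp (t X)] ≤ 1 + t ^ 2 / 2 * exp a * E[X ^ 2] ≤ exp (t ^ 2 / 2 * exp a * E[X ^ 2])`.
Independence multiplies these bounds, Markov's inequality applied to `exp (t Y)` gives the
Chernoff bound `exp (-t λσ + t ^ 2 / 2 * exp a * σ ^ 2)` for each tail, and `t = a / C` turns
its exponent into `-λ ^ 2 / (2 * exp a)`.
-/

open MeasureTheory ProbabilityTheory Real

theorem Real.exp_le_one_add_add_sq_mul_exp {a u : ℝ} (ha : 0 ≤ a) (hu : u ≤ a) :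
    exp u ≤ 1 + u + u ^ 2 / 2 * exp a := by
  set g : ℝ → ℝ := fun x ↦ 1 + x + x ^ 2 / 2 * exp a - exp x
  have hg : ∀ x, HasDerivAt g (1 + x * exp a - exp x) x := fun x ↦
    ((((hasDerivAt_id x).const_add 1).add (((hasDerivAt_pow 2 x).div_const 2).mul_const
      (exp a))).sub (hasDerivAt_exp x)).congr_deriv (by simp)
  have hg_cont : Continuous g := by fun_prop
  suffices g 0 ≤ g u by simpa [g] using this
  rcases le_total u 0 with hu0 | hu0
  · -- on `x ≤ 0`, `1 + x * exp a ≤ 1 + x ≤ exp x`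
    refine antitoneOn_of_hasDerivWithinAt_nonpos (convex_Iic 0) hg_cont.continuousOn
      (fun x _ ↦ (hg x).hasDerivWithinAt) (fun x hx ↦ ?_) hu0 Set.self_mem_Iic hu0
    rw [interior_Iic] at hx
    nlinarith [add_one_le_exp x, one_le_exp ha, hx.out]
  · -- on `0 ≤ x ≤ a`, `exp x - 1 ≤ x * exp x ≤ x * exp a`
    refine monotoneOn_of_hasDerivWithinAt_nonneg (convex_Icc 0 a) hg_cont.continuousOn
      (fun x _ ↦ (hg x).hasDerivWithinAt) (fun x hx ↦ ?_) ⟨le_rfl, ha⟩ ⟨hu0, hu⟩ hu0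
    rw [interior_Icc] at hx
    have h₁ : exp x - 1 ≤ x * exp x := by
      nlinarith [add_one_le_exp (-x), exp_pos x, exp_neg x, mul_inv_cancel₀ (exp_pos x).ne']
    nlinarith [exp_le_exp.2 hx.2.le, hx.1]

namespace ProbabilityTheory

variable {Ω : Type*} [MeasurableSpace Ω] {μ : Measure Ω} [IsProbabilityMeasure μ] {a C t : ℝ}

theorem mgf_le_one_add_sq_mul_exp {X : Ω → ℝ} (hX : AEMeasurable X μ)
    (hbd : ∀ᵐ ω ∂μ, |X ω| ≤ C) (hmean : ∫ ω, X ω ∂μ = 0) (ha : 0 ≤ a) (htC : |t| * C ≤ a) :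
    mgf X μ t ≤ 1 + t ^ 2 / 2 * exp a * ∫ ω, X ω ^ 2 ∂μ := by
  have hX_int : Integrable X μ :=
    .of_bound hX.aestronglyMeasurable C (by simpa only [norm_eq_abs] using hbd)
  have hX2_int : Integrable (fun ω ↦ X ω ^ 2) μ :=
    .of_bound (hX.pow_const 2).aestronglyMeasurable (C ^ 2) <| by
      filter_upwards [hbd] with ω hω
      simpa only [norm_pow, norm_eq_abs] using pow_le_pow_left₀ (abs_nonneg _) hω 2
  have hexp_int : Integrable (fun ω ↦ exp (t * X ω)) μ :=
    integrable_exp_mul_of_mem_Icc hX (hbd.mono fun ω hω ↦ abs_le.1 hω)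
  have hlin_int : Integrable (fun ω ↦ 1 + t * X ω) μ :=
    (integrable_const 1).add (hX_int.const_mul t)
  calc mgf X μ t
      ≤ ∫ ω, (1 + t * X ω + t ^ 2 / 2 * exp a * X ω ^ 2) ∂μ := by
        refine integral_mono_ae hexp_int (hlin_int.add (hX2_int.const_mul _)) ?_
        filter_upwards [hbd] with ω hω
        have htX : t * X ω ≤ a :=
          (le_abs_self _).trans (by rw [abs_mul]; nlinarith [abs_nonneg t])
        linarith [Real.exp_le_one_add_add_sq_mul_exp ha htX]
    _ = 1 + t ^ 2 / 2 * exp a * ∫ ω, X ω ^ 2 ∂μ := by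
        rw [integral_add hlin_int (hX2_int.const_mul _),
          integral_add (integrable_const 1) (hX_int.const_mul t), integral_const_mul,
          integral_const_mul, hmean]
        simp

variable {ι : Type*} [Fintype ι] {X : ι → Ω → ℝ}

theorem iIndepFun.mgf_sum_le_exp (hindep : iIndepFun X μ) (hX : ∀ i, Measurable (X i))
    (hbd : ∀ i, ∀ᵐ ω ∂μ, |X i ω| ≤ C) (hmean : ∀ i, ∫ ω, X i ω ∂μ = 0) (ha : 0 ≤ a)
    (htC : |t| * C ≤ a) :
    mgf (∑ i, X i) μ t ≤ exp (t ^ 2 / 2 * exp a * ∑ i, ∫ ω, X i ω ^ 2 ∂μ) := by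
  rw [hindep.mgf_sum hX, Finset.mul_sum, exp_sum]
  refine Finset.prod_le_prod (fun i _ ↦ mgf_nonneg) fun i _ ↦ ?_
  exact (mgf_le_one_add_sq_mul_exp (hX i).aemeasurable (hbd i) (hmean i) ha htC).trans
    (by linarith [add_one_le_exp (t ^ 2 / 2 * exp a * ∫ ω, X i ω ^ 2 ∂μ)])

theorem iIndepFun.measureReal_sum_ge_le (hindep : iIndepFun X μ) (hX : ∀ i, Measurable (X i))
    (hbd : ∀ i, ∀ᵐ ω ∂μ, |X i ω| ≤ C) (hmean : ∀ i, ∫ ω, X i ω ∂μ = 0) (ha : 0 ≤ a)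
    (ht : 0 ≤ t) (htC : t * C ≤ a) (ε : ℝ) :
    μ.real {ω | ε ≤ ∑ i, X i ω} ≤
      exp (-t * ε + t ^ 2 / 2 * exp a * ∑ i, ∫ ω, X i ω ^ 2 ∂μ) := by
  have hexp_int : Integrable (fun ω ↦ exp (t * (∑ i, X i) ω)) μ :=
    hindep.integrable_exp_mul_sum hX fun i _ ↦
      integrable_exp_mul_of_mem_Icc (hX i).aemeasurable ((hbd i).mono fun ω hω ↦ abs_le.1 hω)
  have hmgf := hindep.mgf_sum_le_exp hX hbd hmean ha (by rwa [abs_of_nonneg ht])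
  calc μ.real {ω | ε ≤ ∑ i, X i ω}
      = μ.real {ω | ε ≤ (∑ i, X i) ω} := by simp only [Finset.sum_apply]
    _ ≤ exp (-t * ε) * mgf (∑ i, X i) μ t := measure_ge_le_exp_mul_mgf ε ht hexp_int
    _ ≤ _ := by rw [exp_add]; gcongr

theorem iIndepFun.measureReal_abs_sum_ge_le (hindep : iIndepFun X μ)
    (hX : ∀ i, Measurable (X i)) (hbd : ∀ i, ∀ᵐ ω ∂μ, |X i ω| ≤ C)
    (hmean : ∀ i, ∫ ω, X i ω ∂μ = 0) (ha : 0 ≤ a) (ht : 0 ≤ t) (htC : t * C ≤ a) (ε : ℝ) :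
    μ.real {ω | ε ≤ |∑ i, X i ω|} ≤
      2 * exp (-t * ε + t ^ 2 / 2 * exp a * ∑ i, ∫ ω, X i ω ^ 2 ∂μ) := by
  have hupper := hindep.measureReal_sum_ge_le hX hbd hmean ha ht htC ε
  have hneg : iIndepFun (fun i ω ↦ -X i ω) μ := hindep.comp (fun _ x ↦ -x) fun _ ↦ measurable_neg
  have hlower := hneg.measureReal_sum_ge_le (fun i ↦ (hX i).neg)
    (fun i ↦ by simpa only [abs_neg] using hbd i)
    (fun i ↦ by simp only [integral_neg, hmean i, neg_zero]) ha ht htC ε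
  simp only [even_two, Even.neg_pow, Finset.sum_neg_distrib] at hlower
  calc μ.real {ω | ε ≤ |∑ i, X i ω|}
      ≤ μ.real ({ω | ε ≤ ∑ i, X i ω} ∪ {ω | ε ≤ -∑ i, X i ω}) :=
        measureReal_mono fun _ ↦ (le_abs (α := ℝ)).1
    _ ≤ _ := (measureReal_union_le _ _).trans (by linarith)

end ProbabilityTheory

theorem stmt7_general {Ω : Type*} [MeasurableSpace Ω] (μ : Measure Ω) [IsProbabilityMeasure μ]
    (n : ℕ) (X : Fin n → Ω → ℝ) (hmeas : ∀ i, Measurable (X i))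
    (hindep : iIndepFun X μ)
    (C : ℝ) (hC : 0 < C) (hbd : ∀ i, ∀ᵐ ω ∂μ, |X i ω| ≤ C)
    (hmean : ∀ i, ∫ ω, X i ω ∂μ = 0)
    (Y : Ω → ℝ) (hY : Y = fun ω => ∑ i, X i ω)
    (σ : ℝ) (hσ : σ = Real.sqrt (∑ i, ∫ ω, (X i ω) ^ 2 ∂μ))
    (lam a : ℝ) (ha : 0 ≤ a) (hlam : lam = a * Real.exp a * σ / C) :
    (μ {ω | lam * σ ≤ |Y ω|}).toReal ≤ 2 * Real.exp (-lam ^ 2 / (2 * Real.exp a)) := by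
  subst hY
  have hvar : ∑ i, ∫ ω, X i ω ^ 2 ∂μ = σ ^ 2 := by
    rw [hσ, sq_sqrt (Finset.sum_nonneg fun i _ ↦ integral_nonneg fun ω ↦ sq_nonneg _)]
  -- the Chernoff bound at `t = a / C`, the largest parameter allowed by `t * C ≤ a`
  calc μ.real {ω | lam * σ ≤ |∑ i, X i ω|}
      ≤ 2 * exp (-(a / C) * (lam * σ) + (a / C) ^ 2 / 2 * exp a * σ ^ 2) := hvar ▸
        hindep.measureReal_abs_sum_ge_le hmeas hbd hmean ha (div_nonneg ha hC.le)
          (div_mul_cancel₀ a hC.ne').le (lam * σ)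
    _ = 2 * exp (-lam ^ 2 / (2 * exp a)) := by
        rw [hlam]
        congr 2
        field_simp
        ring

theorem stmt7 {Ω : Type*} [MeasurableSpace Ω] (μ : Measure Ω) [IsProbabilityMeasure μ]
    (n : ℕ) (X : Fin n → Ω → ℝ) (hmeas : ∀ i, Measurable (X i))
    (hfin : ∀ i, (Set.range (X i)).Finite)
    (hindep : iIndepFun X μ)
    (C : ℝ) (hC : 0 < C) (hbd : ∀ i, ∀ᵐ ω ∂μ, |X i ω| ≤ C)
    (hmean : ∀ i, ∫ ω, X i ω ∂μ = 0)
    (Y : Ω → ℝ) (hY : Y = fun ω => ∑ i, X i ω)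
    (σ : ℝ) (hσ : σ = Real.sqrt (∑ i, ∫ ω, (X i ω) ^ 2 ∂μ))
    (lam a : ℝ) (ha : 0 ≤ a) (hlam : lam = a * Real.exp a * σ / C) :
    (μ {ω | lam * σ ≤ |Y ω|}).toReal ≤ 2 * Real.exp (-lam ^ 2 / (2 * Real.exp a)) :=
  stmt7_general μ n X hmeas hindep C hC hbd hmean Y hY σ hσ lam a ha hlam
end

section
/- Let X_1, ..., X_n be discrete, independent random variables with E[X_i] = 0 and |X_i| ≤ C, Y = Σ X_i, σ = sqrt(Var(Y)), and 0 < δ < 1. If σ/C ≥ (1/e)·sqrt(2e·ln(2/δ)), then with λ = sqrt(2e·ln(2/δ)) we have P(|Y| ≥ λσ) ≤ δ. -/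
/-!
For `|s| C ≤ 1` the pointwise bound `exp x ≤ 1 + x + x²` on `|x| ≤ 1` gives
`E exp (s Xᵢ) ≤ exp (s² E Xᵢ²)` for each centered summand, so by independence
`E exp (s Y) ≤ exp (s² σ²)`. The Chernoff bound on both tails at `s = λ / (e σ)`, which is
admissible precisely because `λ C ≤ e σ`, gives
`P(|Y| ≥ λσ) ≤ 2 exp (-λ² / e + λ² / e²) = 2 (δ / 2) ^ (2 (1 - 1 / e)) ≤ δ`.
-/

open MeasureTheory ProbabilityTheory Real

lemma exp_le_one_add_add_sq {x : ℝ} (hx : |x| ≤ 1) : exp x ≤ 1 + x + x ^ 2 := by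
  linarith [(abs_le.mp (abs_exp_sub_one_sub_id_le hx)).2]

section BoundedCentered

variable {Ω : Type*} [MeasurableSpace Ω] {μ : Measure Ω} {X : Ω → ℝ} {C : ℝ}

lemma integrable_exp_mul_of_abs_le [IsFiniteMeasure μ] (hX : Measurable X)
    (hbd : ∀ᵐ ω ∂μ, |X ω| ≤ C) (s : ℝ) : Integrable (fun ω => exp (s * X ω)) μ := by
  refine .of_bound (hX.const_mul s).exp.aestronglyMeasurable (exp (|s| * C)) ?_
  filter_upwards [hbd] with ω hω
  rw [norm_of_nonneg (exp_pos _).le, exp_le_exp]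
  calc s * X ω ≤ |s| * |X ω| := (le_abs_self _).trans (abs_mul s (X ω)).le
    _ ≤ |s| * C := by gcongr

lemma mgf_le_exp_sq_mul_integral_sq [IsProbabilityMeasure μ] (hX : Measurable X)
    (hbd : ∀ᵐ ω ∂μ, |X ω| ≤ C) (hmean : ∫ ω, X ω ∂μ = 0) {s : ℝ} (hs : |s| * C ≤ 1) :
    mgf X μ s ≤ exp (s ^ 2 * ∫ ω, X ω ^ 2 ∂μ) := by
  have hXint : Integrable X μ :=
    .of_bound hX.aestronglyMeasurable C (by simpa only [norm_eq_abs] using hbd)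
  have hX2int : Integrable (fun ω => X ω ^ 2) μ := by
    refine .of_bound (hX.pow_const 2).aestronglyMeasurable (C ^ 2) ?_
    filter_upwards [hbd] with ω hω
    rw [norm_eq_abs, abs_pow]
    exact pow_le_pow_left₀ (abs_nonneg _) hω 2
  have hpoint : ∀ᵐ ω ∂μ, exp (s * X ω) ≤ 1 + s * X ω + s ^ 2 * X ω ^ 2 := by
    filter_upwards [hbd] with ω hω
    have hsX : |s * X ω| ≤ 1 := by
      rw [abs_mul]
      exact (mul_le_mul_of_nonneg_left hω (abs_nonneg s)).trans hs
    linarith [exp_le_one_add_add_sq hsX, mul_pow s (X ω) 2]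
  calc mgf X μ s ≤ ∫ ω, (1 + s * X ω + s ^ 2 * X ω ^ 2) ∂μ :=
        integral_mono_ae (integrable_exp_mul_of_abs_le hX hbd s)
          (((integrable_const 1).add (hXint.const_mul s)).add (hX2int.const_mul _)) hpoint
    _ = 1 + s ^ 2 * ∫ ω, X ω ^ 2 ∂μ := by
        rw [integral_add (f := fun ω => 1 + s * X ω)
            ((integrable_const 1).add (hXint.const_mul s)) (hX2int.const_mul _),
          integral_add (f := fun _ => 1) (integrable_const 1) (hXint.const_mul s),
          integral_const_mul, integral_const_mul, hmean]
        simp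
    _ ≤ exp (s ^ 2 * ∫ ω, X ω ^ 2 ∂μ) := by linarith [add_one_le_exp (s ^ 2 * ∫ ω, X ω ^ 2 ∂μ)]

end BoundedCentered

section Chernoff

variable {Ω : Type*} [MeasurableSpace Ω] {μ : Measure Ω} [IsFiniteMeasure μ] {Y : Ω → ℝ}

lemma measure_le_abs_le_two_mul_exp (a : ℝ) {t v : ℝ} (ht : 0 ≤ t)
    (hint : ∀ s, Integrable (fun ω => exp (s * Y ω)) μ)
    (hmgf : ∀ s, |s| = t → mgf Y μ s ≤ exp (t ^ 2 * v)) :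
    (μ {ω | a ≤ |Y ω|}).toReal ≤ 2 * exp (-t * a + t ^ 2 * v) := by
  have hsplit : {ω | a ≤ |Y ω|} = {ω | a ≤ Y ω} ∪ {ω | Y ω ≤ -a} := by
    ext ω
    simp only [Set.mem_ofPred_eq, Set.mem_union, le_abs']
    tauto
  have hup := measure_ge_le_exp_mul_mgf a ht (hint t)
  have hdown := measure_le_le_exp_mul_mgf (-a) (neg_nonpos.mpr ht) (hint (-t))
  rw [neg_mul_neg] at hdown
  calc (μ {ω | a ≤ |Y ω|}).toReal
      ≤ (μ {ω | a ≤ Y ω}).toReal + (μ {ω | Y ω ≤ -a}).toReal := by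
        rw [hsplit]; exact measureReal_union_le _ _
    _ ≤ exp (-t * a) * exp (t ^ 2 * v) + exp (-t * a) * exp (t ^ 2 * v) := by
        gcongr
        exacts [hup.trans (by gcongr; exact hmgf t (abs_of_nonneg ht)),
          hdown.trans (by gcongr; exact hmgf (-t) (by rw [abs_neg, abs_of_nonneg ht]))]
    _ = 2 * exp (-t * a + t ^ 2 * v) := by rw [exp_add]; ring

end Chernoff

lemma ProbabilityTheory.iIndepFun.mgf_sum_le_exp_sq_mul {Ω ι : Type*} [MeasurableSpace Ω]
    {μ : Measure Ω} [IsProbabilityMeasure μ] [Fintype ι] {X : ι → Ω → ℝ} {C s : ℝ}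
    (hindep : iIndepFun X μ) (hmeas : ∀ i, Measurable (X i))
    (hbd : ∀ i, ∀ᵐ ω ∂μ, |X i ω| ≤ C) (hmean : ∀ i, ∫ ω, X i ω ∂μ = 0) (hs : |s| * C ≤ 1) :
    mgf (∑ i, X i) μ s ≤ exp (s ^ 2 * ∑ i, ∫ ω, X i ω ^ 2 ∂μ) := by
  rw [hindep.mgf_sum hmeas, Finset.mul_sum, exp_sum]
  exact Finset.prod_le_prod (fun i _ => mgf_nonneg)
    (fun i _ => mgf_le_exp_sq_mul_integral_sq (hmeas i) (hbd i) (hmean i) hs)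

lemma chernoff_exponent_le {lam σ L : ℝ} (hσ : σ ≠ 0) (hL : 0 ≤ L)
    (hlam : lam ^ 2 = 2 * exp 1 * L) :
    -(lam / (σ * exp 1)) * (lam * σ) + (lam / (σ * exp 1)) ^ 2 * σ ^ 2 ≤ -L := by
  have hexponent : -(lam / (σ * exp 1)) * (lam * σ) + (lam / (σ * exp 1)) ^ 2 * σ ^ 2
      = -2 * L + 2 * L / exp 1 := by
    field_simp
    linear_combination (1 - exp 1) * hlam
  have h2e : 2 ≤ exp 1 := by linarith [add_one_le_exp (1 : ℝ)]
  have : 2 * L / exp 1 ≤ L := by rw [div_le_iff₀ (exp_pos 1)]; nlinarith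
  linarith

theorem stmt8_general {Ω : Type*} [MeasurableSpace Ω] (μ : Measure Ω) [IsProbabilityMeasure μ]
    (n : ℕ) (X : Fin n → Ω → ℝ) (hmeas : ∀ i, Measurable (X i))
    (hindep : iIndepFun X μ)
    (C : ℝ) (hC : 0 < C) (hbd : ∀ i, ∀ᵐ ω ∂μ, |X i ω| ≤ C)
    (hmean : ∀ i, ∫ ω, X i ω ∂μ = 0)
    (Y : Ω → ℝ) (hY : Y = fun ω => ∑ i, X i ω)
    (σ : ℝ) (hσ : σ = Real.sqrt (∑ i, ∫ ω, (X i ω) ^ 2 ∂μ))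
    (δ : ℝ) (hδ0 : 0 < δ) (hδ1 : δ < 1)
    (hcase : (1 / Real.exp 1) * Real.sqrt (2 * Real.exp 1 * Real.log (2 / δ)) ≤ σ / C)
    (lam : ℝ) (hlam : lam = Real.sqrt (2 * Real.exp 1 * Real.log (2 / δ))) :
    (μ {ω | lam * σ ≤ |Y ω|}).toReal ≤ δ := by
  set L := log (2 / δ)
  have hL : 0 < L := log_pos (by rw [lt_div_iff₀ hδ0]; linarith)
  have hlam_pos : 0 < lam := hlam ▸ sqrt_pos.mpr (by positivity)
  have hσ_sq : σ ^ 2 = ∑ i, ∫ ω, X i ω ^ 2 ∂μ :=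
    hσ ▸ sq_sqrt (Finset.sum_nonneg fun i _ => integral_nonneg fun ω => sq_nonneg _)
  rw [← hlam, one_div, inv_mul_eq_div, div_le_div_iff₀ (exp_pos 1) hC] at hcase
  have hσ_pos : 0 < σ :=
    pos_of_mul_pos_left ((mul_pos hlam_pos hC).trans_le hcase) (exp_pos 1).le
  set t := lam / (σ * exp 1)
  have htC : t * C ≤ 1 := by rwa [div_mul_eq_mul_div, div_le_one (by positivity)]
  obtain rfl : Y = ∑ i, X i := by rw [hY]; ext ω; simp only [Finset.sum_apply]
  have hmgf (s : ℝ) (hs : |s| = t) : mgf (∑ i, X i) μ s ≤ exp (t ^ 2 * σ ^ 2) := by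
    have := hindep.mgf_sum_le_exp_sq_mul (s := s) hmeas hbd hmean (by rwa [hs])
    rwa [← sq_abs, hs, ← hσ_sq] at this
  calc (μ {ω | lam * σ ≤ |(∑ i, X i) ω|}).toReal
      ≤ 2 * exp (-t * (lam * σ) + t ^ 2 * σ ^ 2) :=
        measure_le_abs_le_two_mul_exp _ (by positivity) (fun s => hindep.integrable_exp_mul_sum
          hmeas fun i _ => integrable_exp_mul_of_abs_le (hmeas i) (hbd i) s) hmgf
    _ ≤ 2 * exp (-L) := by
        gcongr
        exact chernoff_exponent_le hσ_pos.ne' hL.le (hlam ▸ sq_sqrt (by positivity))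
    _ = δ := by rw [exp_neg, exp_log (by positivity)]; field_simp

theorem stmt8 {Ω : Type*} [MeasurableSpace Ω] (μ : Measure Ω) [IsProbabilityMeasure μ]
    (n : ℕ) (X : Fin n → Ω → ℝ) (hmeas : ∀ i, Measurable (X i))
    (hfin : ∀ i, (Set.range (X i)).Finite)
    (hindep : iIndepFun X μ)
    (C : ℝ) (hC : 0 < C) (hbd : ∀ i, ∀ᵐ ω ∂μ, |X i ω| ≤ C)
    (hmean : ∀ i, ∫ ω, X i ω ∂μ = 0)
    (Y : Ω → ℝ) (hY : Y = fun ω => ∑ i, X i ω)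
    (σ : ℝ) (hσ : σ = Real.sqrt (∑ i, ∫ ω, (X i ω) ^ 2 ∂μ))
    (δ : ℝ) (hδ0 : 0 < δ) (hδ1 : δ < 1)
    (hcase : (1 / Real.exp 1) * Real.sqrt (2 * Real.exp 1 * Real.log (2 / δ)) ≤ σ / C)
    (lam : ℝ) (hlam : lam = Real.sqrt (2 * Real.exp 1 * Real.log (2 / δ))) :
    (μ {ω | lam * σ ≤ |Y ω|}).toReal ≤ δ :=
  stmt8_general μ n X hmeas hindep C hC hbd hmean Y hY σ hσ δ hδ0 hδ1 hcase lam hlam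
end

section
/- Let X_1, ..., X_n be discrete, independent random variables with E[X_i] = 0 and |X_i| ≤ C, Y = Σ X_i, σ = sqrt(Var(Y)) > 0, and 0 < δ < 1. If σ/C < (1/e)·sqrt(2e·ln(2/δ)), then with λ = (2C/σ)·ln(2/δ) we have P(|Y| ≥ λσ) ≤ δ. -/
/-!
Chernoff's method with the pointwise estimate `exp u ≤ 1 + u + u² exp |u| / 2` (Taylor's theorem
with Lagrange remainder) gives, for every `t ≥ 0`,
`P(|Y| ≥ ε) ≤ 2 exp (-t ε + t² exp (t C) σ² / 2)`.
Write `L = log (2 / δ)` and take `t = a / C`, where `a exp a = 2 C² L / σ²`. The case hypothesis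
says exactly that `2 C² L / σ² > e`, so `a ≥ 1`; at `ε = λ σ = 2 C L` the exponent is
`-2 a L + a L = -a L ≤ -L`, and `2 exp (-L) = δ`.
-/

open MeasureTheory ProbabilityTheory Real

lemma exp_le_one_add_add_sq_mul_exp_abs (u : ℝ) :
    exp u ≤ 1 + u + u ^ 2 * exp |u| / 2 := by
  rcases eq_or_ne u 0 with rfl | hu
  · simp
  obtain ⟨ξ, hξ, hrem⟩ :=
    taylor_mean_remainder_lagrange_iteratedDeriv (f := exp) (n := 1) hu.symm contDiff_exp.contDiffOn
  have htaylor : taylorWithinEval exp 1 (Set.uIcc 0 u) 0 u = 1 + u := by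
    have := (hasDerivAt_exp 0).hasDerivWithinAt.derivWithin
      (uniqueDiffOn_uIcc hu.symm _ Set.left_mem_uIcc)
    simp [taylor_within_apply, this]
  have hξu : exp ξ ≤ exp |u| :=
    exp_le_exp.2 <| hξ.2.le.trans <| max_le (abs_nonneg u) (le_abs_self u)
  rw [htaylor] at hrem
  simp only [iteratedDeriv_succ, iteratedDeriv_zero, Real.deriv_exp] at hrem
  norm_num at hrem
  nlinarith [sq_nonneg u]

lemma exists_mul_exp_eq_of_exp_one_le {K : ℝ} (hK : exp 1 ≤ K) :
    ∃ a, 1 ≤ a ∧ a * exp a = K := by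
  have h1K : 1 ≤ K := (one_lt_exp_iff.2 one_pos).le.trans hK
  obtain ⟨a, ha, hak⟩ := intermediate_value_Icc h1K (f := fun x => x * exp x) (by fun_prop)
    ⟨by simpa using hK, le_mul_of_one_le_right (by linarith) (one_le_exp (by linarith))⟩
  exact ⟨a, ha.1, hak⟩

lemma exp_one_lt_of_lt_inv_exp_mul_sqrt {x y : ℝ} (hx : 0 < x)
    (h : x < 1 / exp 1 * √(2 * exp 1 * y)) : exp 1 < 2 * y / x ^ 2 := by
  have hy : 0 ≤ 2 * exp 1 * y := by
    by_contra! hneg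
    rw [sqrt_eq_zero_of_nonpos hneg.le] at h
    linarith
  have hsq : x ^ 2 < 2 * y / exp 1 := by
    calc x ^ 2 < (1 / exp 1 * √(2 * exp 1 * y)) ^ 2 := by gcongr
      _ = 2 * y / exp 1 := by rw [mul_pow, sq_sqrt hy]; field_simp
  rw [lt_div_iff₀ (by positivity)]
  rw [lt_div_iff₀ (exp_pos 1)] at hsq
  linarith

section

variable {Ω : Type*} [MeasurableSpace Ω] {μ : Measure Ω} [IsProbabilityMeasure μ] {C : ℝ}

lemma mgf_le_exp_of_abs_le_of_integral_eq_zero {X : Ω → ℝ} (hX : AEMeasurable X μ)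
    (hbd : ∀ᵐ ω ∂μ, |X ω| ≤ C) (hmean : ∫ ω, X ω ∂μ = 0) (t : ℝ) :
    mgf X μ t ≤ exp (t ^ 2 * exp (|t| * C) * (∫ ω, X ω ^ 2 ∂μ) / 2) := by
  set c := t ^ 2 * exp (|t| * C) / 2 with hc
  have hpointwise : ∀ᵐ ω ∂μ, exp (t * X ω) ≤ 1 + t * X ω + c * X ω ^ 2 := by
    filter_upwards [hbd] with ω hω
    have hexp : exp |t * X ω| ≤ exp (|t| * C) := by
      rw [exp_le_exp, abs_mul]
      gcongr
    calc exp (t * X ω) ≤ 1 + t * X ω + (t * X ω) ^ 2 * exp |t * X ω| / 2 :=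
          exp_le_one_add_add_sq_mul_exp_abs _
      _ ≤ 1 + t * X ω + c * X ω ^ 2 := by
          rw [mul_pow, hc]
          nlinarith [mul_le_mul_of_nonneg_left hexp (mul_nonneg (sq_nonneg t) (sq_nonneg (X ω)))]
  have hXint : Integrable X μ := .of_bound hX.aestronglyMeasurable C (by simpa using hbd)
  have hX2int : Integrable (fun ω => X ω ^ 2) μ := by
    refine .of_bound (hX.pow_const 2).aestronglyMeasurable (C ^ 2) ?_
    filter_upwards [hbd] with ω hω
    simpa only [norm_pow, norm_eq_abs] using pow_le_pow_left₀ (abs_nonneg _) hω 2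
  have hlin : Integrable (fun ω => 1 + t * X ω) μ := (integrable_const 1).add (hXint.const_mul t)
  have hquad : Integrable (fun ω => c * X ω ^ 2) μ := hX2int.const_mul c
  calc mgf X μ t ≤ ∫ ω, (1 + t * X ω + c * X ω ^ 2) ∂μ :=
        integral_mono_ae (integrable_exp_mul_of_mem_Icc hX (hbd.mono fun _ => abs_le.1))
          (hlin.add hquad) hpointwise
    _ = 1 + c * ∫ ω, X ω ^ 2 ∂μ := by
        rw [integral_add hlin hquad, integral_add (integrable_const 1) (hXint.const_mul t),
          integral_const_mul, integral_const_mul, hmean]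
        simp
    _ ≤ exp (c * ∫ ω, X ω ^ 2 ∂μ) := by
        linarith [add_one_le_exp (c * ∫ ω, X ω ^ 2 ∂μ)]
    _ = exp (t ^ 2 * exp (|t| * C) * (∫ ω, X ω ^ 2 ∂μ) / 2) := by rw [hc]; ring_nf

variable {ι : Type*} [Fintype ι] {X : ι → Ω → ℝ}

lemma ProbabilityTheory.iIndepFun.mgf_sum_le_exp_s9 (hindep : iIndepFun X μ)
    (hmeas : ∀ i, Measurable (X i)) (hbd : ∀ i, ∀ᵐ ω ∂μ, |X i ω| ≤ C)
    (hmean : ∀ i, ∫ ω, X i ω ∂μ = 0) (t : ℝ) :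
    mgf (∑ i, X i) μ t ≤
      exp (t ^ 2 * exp (|t| * C) * (∑ i, ∫ ω, X i ω ^ 2 ∂μ) / 2) := by
  rw [hindep.mgf_sum hmeas, Finset.mul_sum, Finset.sum_div, exp_sum]
  exact Finset.prod_le_prod (fun i _ => mgf_nonneg) fun i _ =>
    mgf_le_exp_of_abs_le_of_integral_eq_zero (hmeas i).aemeasurable (hbd i) (hmean i) t

lemma ProbabilityTheory.iIndepFun.measureReal_abs_sum_ge_le_two_mul_exp (hindep : iIndepFun X μ)
    (hmeas : ∀ i, Measurable (X i)) (hbd : ∀ i, ∀ᵐ ω ∂μ, |X i ω| ≤ C)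
    (hmean : ∀ i, ∫ ω, X i ω ∂μ = 0) (ε : ℝ) {t : ℝ} (ht : 0 ≤ t) :
    μ.real {ω | ε ≤ |∑ i, X i ω|} ≤
      2 * exp (-t * ε + t ^ 2 * exp (t * C) * (∑ i, ∫ ω, X i ω ^ 2 ∂μ) / 2) := by
  set S := ∑ i, X i
  set B := t ^ 2 * exp (t * C) * (∑ i, ∫ ω, X i ω ^ 2 ∂μ) / 2
  have hS : ∀ s, Integrable (fun ω => exp (s * S ω)) μ := fun s =>
    hindep.integrable_exp_mul_sum hmeas fun i _ =>
      integrable_exp_mul_of_mem_Icc (hmeas i).aemeasurable ((hbd i).mono fun _ => abs_le.1)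
  have hmgf : ∀ s, |s| = t → mgf S μ s ≤ exp B := by
    rintro s rfl
    simpa only [B, sq_abs] using hindep.mgf_sum_le_exp_s9 hmeas hbd hmean s
  have hupper : μ.real {ω | ε ≤ S ω} ≤ exp (-t * ε) * exp B :=
    (measure_ge_le_exp_mul_mgf ε ht (hS t)).trans <|
      mul_le_mul_of_nonneg_left (hmgf t (abs_of_nonneg ht)) (exp_pos _).le
  have hlower : μ.real {ω | ε ≤ (-S) ω} ≤ exp (-t * ε) * exp B := by
    refine (measure_ge_le_exp_mul_mgf ε ht ?_).trans ?_
    · simpa using hS (-t)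
    · rw [mgf_neg]
      exact mul_le_mul_of_nonneg_left (hmgf (-t) (by rw [abs_neg, abs_of_nonneg ht]))
        (exp_pos _).le
  have hsplit : {ω | ε ≤ |∑ i, X i ω|} ⊆ {ω | ε ≤ S ω} ∪ {ω | ε ≤ (-S) ω} := by
    intro ω hω
    simpa [S, Finset.sum_apply, le_abs] using hω
  calc μ.real {ω | ε ≤ |∑ i, X i ω|}
      ≤ μ.real {ω | ε ≤ S ω} + μ.real {ω | ε ≤ (-S) ω} :=
        (measureReal_mono hsplit).trans (measureReal_union_le _ _)
    _ ≤ 2 * exp (-t * ε + B) := by rw [exp_add]; linarith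

end

theorem stmt9_general {Ω : Type*} [MeasurableSpace Ω] (μ : Measure Ω) [IsProbabilityMeasure μ]
    (n : ℕ) (X : Fin n → Ω → ℝ) (hmeas : ∀ i, Measurable (X i))
    (hindep : iIndepFun X μ)
    (C : ℝ) (hC : 0 < C) (hbd : ∀ i, ∀ᵐ ω ∂μ, |X i ω| ≤ C)
    (hmean : ∀ i, ∫ ω, X i ω ∂μ = 0)
    (Y : Ω → ℝ) (hY : Y = fun ω => ∑ i, X i ω)
    (σ : ℝ) (hσ : σ = Real.sqrt (∑ i, ∫ ω, (X i ω) ^ 2 ∂μ)) (hσpos : 0 < σ)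
    (δ : ℝ) (hδ0 : 0 < δ)
    (hcase : σ / C < (1 / Real.exp 1) * Real.sqrt (2 * Real.exp 1 * Real.log (2 / δ)))
    (lam : ℝ) (hlam : lam = (2 * C / σ) * Real.log (2 / δ)) :
    (μ {ω | lam * σ ≤ |Y ω|}).toReal ≤ δ := by
  set L := log (2 / δ)
  have hK := exp_one_lt_of_lt_inv_exp_mul_sqrt (by positivity) hcase
  have hL : 0 < L := by
    have := (exp_pos 1).trans hK
    rw [div_pos_iff_of_pos_right (by positivity)] at this
    linarith
  obtain ⟨a, ha, hae⟩ := exists_mul_exp_eq_of_exp_one_le hK.le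
  have hV : ∑ i, ∫ ω, X i ω ^ 2 ∂μ = σ ^ 2 := by
    rw [hσ, sq_sqrt (Finset.sum_nonneg fun i _ => integral_nonneg fun ω => sq_nonneg _)]
  have hexponent :
      -(a / C) * (lam * σ) + (a / C) ^ 2 * exp (a / C * C) * σ ^ 2 / 2 = -(a * L) := by
    have hexp : exp a = 2 * L / (σ / C) ^ 2 / a := by rw [← hae]; field_simp
    rw [div_mul_cancel₀ a hC.ne', hexp, hlam]
    field_simp
    ring
  calc (μ {ω | lam * σ ≤ |Y ω|}).toReal
      ≤ 2 * exp (-(a / C) * (lam * σ) + (a / C) ^ 2 * exp (a / C * C) * σ ^ 2 / 2) := by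
        simpa only [hY, hV, measureReal_def] using hindep.measureReal_abs_sum_ge_le_two_mul_exp
          hmeas hbd hmean (lam * σ) (t := a / C) (by positivity)
    _ ≤ 2 * exp (-L) := by
        rw [hexponent]
        gcongr
        nlinarith
    _ = δ := by
        rw [exp_neg, exp_log (by positivity)]
        field_simp

theorem stmt9 {Ω : Type*} [MeasurableSpace Ω] (μ : Measure Ω) [IsProbabilityMeasure μ]
    (n : ℕ) (X : Fin n → Ω → ℝ) (hmeas : ∀ i, Measurable (X i))
    (hfin : ∀ i, (Set.range (X i)).Finite)
    (hindep : iIndepFun X μ)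
    (C : ℝ) (hC : 0 < C) (hbd : ∀ i, ∀ᵐ ω ∂μ, |X i ω| ≤ C)
    (hmean : ∀ i, ∫ ω, X i ω ∂μ = 0)
    (Y : Ω → ℝ) (hY : Y = fun ω => ∑ i, X i ω)
    (σ : ℝ) (hσ : σ = Real.sqrt (∑ i, ∫ ω, (X i ω) ^ 2 ∂μ)) (hσpos : 0 < σ)
    (δ : ℝ) (hδ0 : 0 < δ) (hδ1 : δ < 1)
    (hcase : σ / C < (1 / Real.exp 1) * Real.sqrt (2 * Real.exp 1 * Real.log (2 / δ)))
    (lam : ℝ) (hlam : lam = (2 * C / σ) * Real.log (2 / δ)) :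
    (μ {ω | lam * σ ≤ |Y ω|}).toReal ≤ δ :=
  stmt9_general μ n X hmeas hindep C hC hbd hmean Y hY σ hσ hσpos δ hδ0 hcase lam hlam
end

section
/- Suppose |w_k^{SEM} − w_k^{EM}| ≤ λ_w·w_k^{EM} with 0 < λ_w < 1, and suppose |Σ_{n=1}^N z_{nk}(x_n − μ_k^{EM})_i| ≤ λ_μ·τ_{ki}. Then |(μ_k^{SEM} − μ_k^{EM})_i| ≤ λ_μ·τ_{ki} / ((1 − λ_w)·r_k). -/
theorem stmt13 (N D : ℕ) (x : Fin N → Fin D → ℝ) (i : Fin D)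
    (p : Fin N → ℝ) (hp : ∀ n, p n ∈ Set.Icc (0 : ℝ) 1)
    (r : ℝ) (hr : r = ∑ n, p n) (hrpos : 0 < r)
    (z : Fin N → ℝ) (hz : ∀ n, z n = 0 ∨ z n = 1)
    (hzpos : 0 < ∑ n, z n)
    (wEM wSEM : ℝ) (hwEM : wEM = r / N) (hwSEM : wSEM = (∑ n, z n) / N)
    (μEM μSEM : Fin D → ℝ)
    (hμEM : μEM = fun d => (∑ n, p n * x n d) / r)
    (hμSEM : μSEM = fun d => (∑ n, z n * x n d) / (∑ n, z n))
    (τ : ℝ) (hτ : τ = Real.sqrt (∑ n, p n * (1 - p n) * (x n i - μEM i) ^ 2))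
    (lw : ℝ) (hlw0 : 0 < lw) (hlw1 : lw < 1)
    (hw : |wSEM - wEM| ≤ lw * wEM)
    (lμ : ℝ) (hlμ0 : 0 ≤ lμ)
    (hsum : |∑ n, z n * (x n i - μEM i)| ≤ lμ * τ) :
    |μSEM i - μEM i| ≤ lμ * τ / ((1 - lw) * r) := by
  have hN : (0:ℝ) < N := by
    rcases Nat.eq_zero_or_pos N with h | h
    · subst h; simp at hr; simp [hr] at hrpos
    · exact_mod_cast h
  set S := ∑ n, z n with hS
  -- S ≥ (1 - lw) * r
  have hwlb : (1 - lw) * wEM ≤ wSEM := by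
    have := abs_le.mp hw
    linarith [this.1]
  have hSlb : (1 - lw) * r ≤ S := by
    have h1 : (1 - lw) * (r / N) ≤ S / N := by rw [← hwEM, ← hwSEM]; exact hwlb
    have h2 := mul_le_mul_of_nonneg_right h1 hN.le
    rw [div_mul_cancel₀ _ (ne_of_gt hN), mul_assoc, div_mul_cancel₀ _ (ne_of_gt hN)] at h2
    exact h2
  have hdiff : μSEM i - μEM i = (∑ n, z n * (x n i - μEM i)) / S := by
    rw [hμSEM]
    simp only
    rw [eq_div_iff (ne_of_gt hzpos)]
    have : ∑ n, z n * (x n i - μEM i) = (∑ n, z n * x n i) - S * μEM i := by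
      rw [Finset.sum_mul, ← Finset.sum_sub_distrib]
      congr 1; ext n; ring
    rw [this]
    field_simp
  rw [hdiff, abs_div, abs_of_pos hzpos]
  have hpos : 0 < (1 - lw) * r := mul_pos (by linarith) hrpos
  have hlτ : 0 ≤ lμ * τ := le_trans (abs_nonneg _) hsum
  calc |∑ n, z n * (x n i - μEM i)| / S ≤ (lμ * τ) / S := by gcongr
    _ ≤ lμ * τ / ((1 - lw) * r) := by gcongr
end

section
/- Assume |w_k^{SEM} − w_k^{EM}| ≤ λ_w·w_k^{EM} (0 < λ_w < 1), |(μ_k^{SEM} − μ_k^{EM})_ℓ| ≤ λ_{μℓ}·τ_{kℓ}/((1−λ_w)·r_k) for ℓ = i, j, and |Σ_n z_{nk}(Υ_{kn} − Σ_k^{EM})_{ij}| ≤ λ_Σ·ρ_{kij}. Then |(Σ_k^{SEM} − Σ_k^{EM})_{ij}| ≤ λ_Σ·ρ_{kij}/((1−λ_w)·r_k) + λ_{μi}λ_{μj}·τ_{ki}τ_{kj}/((1−λ_w)²·r_k²). -/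
theorem stmt17 (N D : ℕ) (x : Fin N → Fin D → ℝ) (i j : Fin D)
    (p : Fin N → ℝ) (hp : ∀ n, p n ∈ Set.Icc (0 : ℝ) 1)
    (r : ℝ) (hr : r = ∑ n, p n) (hrpos : 0 < r)
    (z : Fin N → ℝ) (hz : ∀ n, z n = 0 ∨ z n = 1) (hzpos : 0 < ∑ n, z n)
    (wEM wSEM : ℝ) (hwEM : wEM = r / N) (hwSEM : wSEM = (∑ n, z n) / N)
    (μEM μSEM : Fin D → ℝ)
    (hμEM : μEM = fun d => (∑ n, p n * x n d) / r)
    (hμSEM : μSEM = fun d => (∑ n, z n * x n d) / (∑ n, z n))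
    (Υ : Fin N → Fin D → Fin D → ℝ)
    (hΥ : Υ = fun n a b => (x n a - μEM a) * (x n b - μEM b))
    (SigEM : Fin D → Fin D → ℝ)
    (hSigEM : SigEM = fun a b => (∑ n, p n * Υ n a b) / r)
    (SigSEM : Fin D → Fin D → ℝ)
    (hSigSEM : SigSEM = fun a b =>
        (∑ n, z n * ((x n a - μSEM a) * (x n b - μSEM b))) / (∑ n, z n))
    (τ : Fin D → ℝ)
    (hτ : τ = fun d => Real.sqrt (∑ n, p n * (1 - p n) * (x n d - μEM d) ^ 2))
    (ρ : ℝ) (hρ : ρ = Real.sqrt (∑ n, p n * (1 - p n) * (Υ n i j - SigEM i j) ^ 2))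
    (lw : ℝ) (hlw0 : 0 < lw) (hlw1 : lw < 1)
    (lμi lμj lSig : ℝ) (hlμi : 0 ≤ lμi) (hlμj : 0 ≤ lμj) (hlSig : 0 ≤ lSig)
    (hw : |wSEM - wEM| ≤ lw * wEM)
    (hmi : |μSEM i - μEM i| ≤ lμi * τ i / ((1 - lw) * r))
    (hmj : |μSEM j - μEM j| ≤ lμj * τ j / ((1 - lw) * r))
    (hsum : |∑ n, z n * (Υ n i j - SigEM i j)| ≤ lSig * ρ) :
    |SigSEM i j - SigEM i j| ≤
      lSig * ρ / ((1 - lw) * r) + lμi * lμj * (τ i * τ j) / ((1 - lw) ^ 2 * r ^ 2) := by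
  set Z := ∑ n, z n with hZdef
  have hZ0 : Z ≠ 0 := ne_of_gt hzpos
  have hN : 0 < N := by
    rcases Nat.eq_zero_or_pos N with h | h
    · subst h; simp [hZdef] at hzpos
    · exact h
  have hNR : (0:ℝ) < N := by exact_mod_cast hN
  have hc : (0:ℝ) < (1 - lw) * r := by
    have : 0 < 1 - lw := by linarith
    positivity
  -- Z ≥ (1-lw)*r
  have hZlb : (1 - lw) * r ≤ Z := by
    have h1 : wEM - wSEM ≤ lw * wEM := by
      calc wEM - wSEM ≤ |wEM - wSEM| := le_abs_self _
        _ = |wSEM - wEM| := abs_sub_comm _ _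
        _ ≤ lw * wEM := hw
    have h2 : (1 - lw) * wEM ≤ wSEM := by linarith
    rw [hwEM, hwSEM] at h2
    have h3 := mul_le_mul_of_nonneg_right h2 hNR.le
    calc (1 - lw) * r = (1 - lw) * (r / N) * N := by field_simp
      _ ≤ Z / N * N := h3
      _ = Z := by field_simp
  have hA : ∑ n, z n * x n i = Z * μSEM i := by rw [hμSEM]; field_simp
  have hB : ∑ n, z n * x n j = Z * μSEM j := by rw [hμSEM]; field_simp
  have h1 : ∑ n, z n * (x n i - μEM i) = Z * (μSEM i - μEM i) := by
    simp only [mul_sub, Finset.sum_sub_distrib, ← Finset.sum_mul, hA, ← hZdef]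
  have h2 : ∑ n, z n * (x n j - μEM j) = Z * (μSEM j - μEM j) := by
    simp only [mul_sub, Finset.sum_sub_distrib, ← Finset.sum_mul, hB, ← hZdef]
  have expand : ∑ n, z n * ((x n i - μSEM i) * (x n j - μSEM j))
      = ∑ n, z n * Υ n i j - Z * ((μSEM i - μEM i) * (μSEM j - μEM j)) := by
    have step : ∀ n ∈ Finset.univ, z n * ((x n i - μSEM i) * (x n j - μSEM j))
        = z n * Υ n i j - (μSEM i - μEM i) * (z n * (x n j - μEM j))
          - (μSEM j - μEM j) * (z n * (x n i - μEM i))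
          + (μSEM i - μEM i) * (μSEM j - μEM j) * z n := by
      intro n _
      rw [hΥ]
      have hzi : z n * (μSEM i - μEM i) * (μSEM j - μEM j) = z n * ((μSEM i - μEM i) * (μSEM j - μEM j)) := by ring
      ring
    rw [Finset.sum_congr rfl step]
    simp only [Finset.sum_add_distrib, Finset.sum_sub_distrib, ← Finset.mul_sum, h1, h2,
      ← Finset.sum_mul, ← hZdef]
    ring
  have hsplit : ∑ n, z n * (Υ n i j - SigEM i j) = ∑ n, z n * Υ n i j - Z * SigEM i j := by
    simp only [mul_sub, Finset.sum_sub_distrib, ← Finset.sum_mul, ← hZdef]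
  have key : SigSEM i j - SigEM i j
      = (∑ n, z n * (Υ n i j - SigEM i j)) / Z - (μSEM i - μEM i) * (μSEM j - μEM j) := by
    rw [hSigSEM]
    simp only
    rw [expand, hsplit]
    field_simp
    ring
  have hρ0 : 0 ≤ ρ := hρ ▸ Real.sqrt_nonneg _
  have hτi : 0 ≤ τ i := hτ ▸ Real.sqrt_nonneg _
  have hτj : 0 ≤ τ j := hτ ▸ Real.sqrt_nonneg _
  rw [key]
  have b1 : |(∑ n, z n * (Υ n i j - SigEM i j)) / Z| ≤ lSig * ρ / ((1 - lw) * r) := by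
    rw [abs_div, abs_of_pos hzpos]
    exact div_le_div₀ (by positivity) hsum hc hZlb
  have b2 : |(μSEM i - μEM i) * (μSEM j - μEM j)|
      ≤ lμi * lμj * (τ i * τ j) / ((1 - lw) ^ 2 * r ^ 2) := by
    rw [abs_mul]
    calc |μSEM i - μEM i| * |μSEM j - μEM j|
        ≤ (lμi * τ i / ((1 - lw) * r)) * (lμj * τ j / ((1 - lw) * r)) :=
          mul_le_mul hmi hmj (abs_nonneg _) (le_trans (abs_nonneg _) hmi)
      _ = lμi * lμj * (τ i * τ j) / ((1 - lw) ^ 2 * r ^ 2) := by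
          rw [div_mul_div_comm]
          rw [show (1 - lw) * r * ((1 - lw) * r) = (1 - lw) ^ 2 * r ^ 2 by ring]
          ring_nf
  calc |(∑ n, z n * (Υ n i j - SigEM i j)) / Z - (μSEM i - μEM i) * (μSEM j - μEM j)|
      ≤ |(∑ n, z n * (Υ n i j - SigEM i j)) / Z| + |(μSEM i - μEM i) * (μSEM j - μEM j)| :=
        abs_sub _ _
    _ ≤ _ := add_le_add b1 b2
end
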